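/- For integers c_1, …, c_l with c_l > 2 and any integer k ≥ l, one has q^{k−l+1}·E^♭_l(c_1,…,c_{l−1}, c_l − 1)_q = E^♯_{k+1}(c_1,…,c_l, 2^{(k−l+1)})_q − E^♯_k(c_1,…,c_l, 2^{(k−l)})_q, where 2^{(j)} denotes j consecutive entries equal to 2. -/
import Mathlib


noncomputable section

/-- The field ℚ(q) of rational functions over ℚ. -/
abbrev K : Type := RatFunc ℚ

/-- The variable q. -/
def q : K := RatFunc.X

/-- Right q-integer `[n]^♯` with deformation parameter `x`. -/
def qsX (x : K) (n : ℤ) : K := (1 - x ^ n) / (1 - x)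

/-- Left q-integer `[n]^♭` with deformation parameter `x`. -/
def qfX (x : K) (n : ℤ) : K := (1 - x ^ (n - 1) + x ^ n - x ^ (n + 1)) / (1 - x)

/-- Right q-integer `[n]^♯_q`. -/
def qs (n : ℤ) : K := qsX q n

/-- Left q-integer `[n]^♭_q`. -/
def qf (n : ℤ) : K := qfX q n

/-- Right q-deformed Euler continuant `E^♯` (first-row expansion of the
tridiagonal determinant), with parameter `x`. -/
def EsharpX (x : K) : List ℤ → K
  | [] => 1
  | [c] => qsX x c
  | c :: d :: rest => qsX x c * EsharpX x (d :: rest) - x ^ (c - 1) * EsharpX x rest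

/-- Left q-deformed Euler continuant `E^♭` (first-row expansion of the
tridiagonal determinant whose (k,k) entry is the left q-integer), with parameter `x`. -/
def EflatX (x : K) : List ℤ → K
  | [] => 1
  | [c] => qfX x c
  | c :: d :: rest => qsX x c * EflatX x (d :: rest) - x ^ (c - 1) * EflatX x rest

def Esharp (L : List ℤ) : K := EsharpX q L

def Eflat (L : List ℤ) : K := EflatX q L

/-- `E^♯_{j-1}(d_2,…,d_j)` for the input list `(d_1,…,d_j)`, with the
convention `E^♯_{-1}() = 0` when the list is empty. -/
def EsharpD : List ℤ → K
  | [] => 0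
  | _ :: rest => Esharp rest

/-- `E^♭_{j-1}(d_2,…,d_j)` for the input list `(d_1,…,d_j)`, with the
convention `E^♭_{-1}() = 1 - q` when the list is empty. -/
def EflatD : List ℤ → K
  | [] => 1 - q
  | _ :: rest => Eflat rest

/-- Left q-deformed negative continued fraction `[[c_1,…,c_k]]^♭_q`. -/
def nflat : List ℤ → K
  | [] => 0
  | [c] => qf c
  | c :: d :: rest => qs c - q ^ (c - 1) / nflat (d :: rest)

/-- Right q-deformed negative continued fraction `[[c_1,…,c_k]]^♯_q`. -/
def nsharp : List ℤ → K
  | [] => 0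
  | [c] => qs c
  | c :: d :: rest => qs c - q ^ (c - 1) / nsharp (d :: rest)

/-- Left q-deformed regular continued fraction, with alternating parameter `x`, `x⁻¹`. -/
def regFlatX : K → List ℤ → K
  | _, [] => 0
  | x, [a] => qfX x a
  | x, a :: d :: rest => qsX x a + x ^ a / regFlatX x⁻¹ (d :: rest)

/-- Left q-deformed regular continued fraction `[a_1,…,a_{2m}]^♭_q`. -/
def regFlat (L : List ℤ) : K := regFlatX q L

/-- Classical negative continued fraction `[[c_1,…,c_k]] ∈ ℚ`. -/
def negCF : List ℤ → ℚ
  | [] => 0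
  | [c] => c
  | c :: d :: rest => c - 1 / negCF (d :: rest)

/-- Classical regular continued fraction `[a_1,…,a_{2m}] ∈ ℚ`. -/
def regCF : List ℤ → ℚ
  | [] => 0
  | [a] => a
  | a :: d :: rest => a + 1 / regCF (d :: rest)

/-- The matrix σ_{1,q} as an invertible 2×2 matrix over ℚ(q). -/
def σ1 : (Matrix (Fin 2) (Fin 2) K)ˣ where
  val := !![q⁻¹, -q⁻¹; 0, 1]
  inv := !![q, 1; 0, 1]
  val_inv := by
    have hq : (q : K) ≠ 0 := RatFunc.X_ne_zero
    ext i j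
    fin_cases i <;> fin_cases j <;>
      simp [Matrix.mul_apply, Fin.sum_univ_two, inv_mul_cancel₀ hq]
  inv_val := by
    have hq : (q : K) ≠ 0 := RatFunc.X_ne_zero
    ext i j
    fin_cases i <;> fin_cases j <;>
      simp [Matrix.mul_apply, Fin.sum_univ_two, mul_inv_cancel₀ hq]

/-- The matrix σ_{2,q} as an invertible 2×2 matrix over ℚ(q). -/
def σ2 : (Matrix (Fin 2) (Fin 2) K)ˣ where
  val := !![1, 0; 1, q⁻¹]
  inv := !![1, 0; -q, q]
  val_inv := by
    have hq : (q : K) ≠ 0 := RatFunc.X_ne_zero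
    ext i j
    fin_cases i <;> fin_cases j <;>
      simp [Matrix.mul_apply, Fin.sum_univ_two, inv_mul_cancel₀ hq]
  inv_val := by
    have hq : (q : K) ≠ 0 := RatFunc.X_ne_zero
    ext i j
    fin_cases i <;> fin_cases j <;>
      simp [Matrix.mul_apply, Fin.sum_univ_two, mul_inv_cancel₀ hq]

/-- The matrix S_q as an invertible 2×2 matrix over ℚ(q). -/
def Sq : (Matrix (Fin 2) (Fin 2) K)ˣ where
  val := !![0, -q⁻¹; 1, 0]
  inv := !![0, 1; -q, 0]
  val_inv := by
    have hq : (q : K) ≠ 0 := RatFunc.X_ne_zero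
    ext i j
    fin_cases i <;> fin_cases j <;>
      simp [Matrix.mul_apply, Fin.sum_univ_two, inv_mul_cancel₀ hq]
  inv_val := by
    have hq : (q : K) ≠ 0 := RatFunc.X_ne_zero
    ext i j
    fin_cases i <;> fin_cases j <;>
      simp [Matrix.mul_apply, Fin.sum_univ_two, mul_inv_cancel₀ hq]

/-- The product σ_{1,q}^{-c_1}·S_q·σ_{1,q}^{-c_2}·S_q⋯σ_{1,q}^{-c_k}·S_q. -/
def prodCS : List ℤ → (Matrix (Fin 2) (Fin 2) K)ˣ
  | [] => 1
  | c :: rest => σ1 ^ (-c) * Sq * prodCS rest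

/-- The product σ_{1,q}^{-a_1}·σ_{2,q}^{a_2}⋯σ_{1,q}^{-a_{2m-1}}·σ_{2,q}^{a_{2m}}. -/
def prodReg : List ℤ → (Matrix (Fin 2) (Fin 2) K)ˣ
  | [] => 1
  | [a] => σ1 ^ (-a)
  | a :: b :: rest => σ1 ^ (-a) * σ2 ^ b * prodReg rest

/-- The sum a_2 + a_4 + ⋯ of the even-indexed entries. -/
def evenSum : List ℤ → ℤ
  | [] => 0
  | [_] => 0
  | _ :: b :: rest => b + evenSum rest

/-- Möbius action of a 2×2 matrix on ℚ(q). -/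
def mobius (A : Matrix (Fin 2) (Fin 2) K) (x : K) : K :=
  (A 0 0 * x + A 0 1) / (A 1 0 * x + A 1 1)

-- aux
lemma hq0 : (q : K) ≠ 0 := RatFunc.X_ne_zero

lemma h1q : (1 : K) - q ≠ 0 := by
  have hp : (1 - Polynomial.X : Polynomial ℚ) ≠ 0 := by
    intro h
    have := congrArg (Polynomial.eval 0) h
    simp at this
  have := RatFunc.algebraMap_ne_zero hp
  simpa [q, map_sub, map_one] using this

lemma Esharp_rep (m : ℕ) :
    Esharp (List.replicate m 2) = (1 - q ^ (m + 1 : ℤ)) / (1 - q) := by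
  induction m using Nat.twoStepInduction with
  | zero =>
    simp only [List.replicate_zero, Esharp, EsharpX, Nat.cast_zero, zero_add, zpow_one]
    exact (div_self h1q).symm
  | one => simp [Esharp, EsharpX, qsX, qs]
  | more m ih ih2 =>
    have e : List.replicate (m + 2) 2 = (2 : ℤ) :: (2 : ℤ) :: List.replicate m 2 := by
      simp [List.replicate_succ]
    rw [e]
    have e1 : List.replicate (m + 1) 2 = (2 : ℤ) :: List.replicate m 2 := by
      simp [List.replicate_succ]
    rw [Esharp, EsharpX]
    rw [← e1, show EsharpX q (List.replicate (m+1) 2) = Esharp (List.replicate (m+1) 2) from rfl,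
      show EsharpX q (List.replicate m 2) = Esharp (List.replicate m 2) from rfl, ih, ih2, qsX]
    have h2 : (q:K) ^ (2:ℤ) = q * q := by
      rw [show (2:ℤ) = 1 + 1 from rfl, zpow_add₀ hq0, zpow_one]
    have hm1 : (q:K) ^ ((m:ℤ) + 2 + 1) = q ^ ((m:ℤ)+1) * q * q := by
      rw [show (m:ℤ)+2+1 = ((m:ℤ)+1)+1+1 by ring, zpow_add₀ hq0, zpow_add₀ hq0, zpow_one]
    have hm2 : (q:K) ^ ((m:ℤ) + 1 + 1) = q ^ ((m:ℤ)+1) * q := by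
      rw [zpow_add₀ hq0, zpow_one]
    push_cast
    rw [hm1, hm2, h2, zpow_one]
    set u : K := (1 - q)⁻¹ with hu_def
    have hu : (1 - q) * u = 1 := mul_inv_cancel₀ h1q
    set a : K := q ^ ((m:ℤ) + 1) with ha
    simp only [div_eq_mul_inv, ← hu_def]
    linear_combination ((1 + q) * (1 - a * q) * u) * hu

lemma Esharp_cons (c d : ℤ) (rest : List ℤ) :
    Esharp (c :: d :: rest) = qs c * Esharp (d :: rest) - q ^ (c - 1) * Esharp rest := rfl

lemma Eflat_cons (c d : ℤ) (rest : List ℤ) :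
    Eflat (c :: d :: rest) = qs c * Eflat (d :: rest) - q ^ (c - 1) * Eflat rest := rfl

lemma Esharp_cons_rep (cl : ℤ) (m : ℕ) :
    Esharp (cl :: List.replicate m 2)
      = qs cl * ((1 - q ^ ((m : ℤ) + 1)) / (1 - q)) - q ^ (cl - 1) * ((1 - q ^ (m : ℤ)) / (1 - q)) := by
  cases m with
  | zero =>
    simp only [List.replicate_zero, Nat.cast_zero, zero_add, zpow_one, zpow_zero, sub_self,
      zero_div, mul_zero, sub_zero, div_self h1q, mul_one]
    rfl
  | succ m =>
    rw [List.replicate_succ, Esharp_cons, ← List.replicate_succ, Esharp_rep, Esharp_rep]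
    push_cast
    ring

lemma diff_rep (m : ℕ) :
    Esharp (List.replicate (m + 1) 2) - Esharp (List.replicate m 2) = q ^ ((m : ℤ) + 1) := by
  rw [Esharp_rep, Esharp_rep]
  push_cast
  rw [show ((m : ℤ) + 1 + 1) = ((m : ℤ) + 1) + 1 by ring, zpow_add₀ hq0 _ 1, zpow_one,
    div_sub_div_same, eq_comm, eq_div_iff h1q]
  ring

lemma qf_eq (cl : ℤ) : qf (cl - 1) = qs cl - q ^ (cl - 2) := by
  obtain ⟨a, rfl⟩ : ∃ a, cl = a + 2 := ⟨cl - 2, by ring⟩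
  unfold qf qfX qs qsX
  rw [show a + 2 - 1 - 1 = a by ring, show a + 2 - 1 + 1 = a + 2 by ring,
    show a + 2 - 1 = a + 1 by ring, show a + 2 - 2 = a by ring,
    zpow_add₀ hq0 a 2, zpow_add₀ hq0 a 1, zpow_one,
    show (q : K) ^ (2 : ℤ) = q * q by rw [show (2:ℤ) = 1 + 1 by ring, zpow_add₀ hq0, zpow_one],
    div_eq_mul_inv, div_eq_mul_inv]
  linear_combination (-(q ^ (a : ℤ) : K)) * (mul_inv_cancel₀ h1q)

lemma diff_cons_rep (cl : ℤ) (n : ℕ) :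
    Esharp (cl :: List.replicate (n + 1) 2) - Esharp (cl :: List.replicate n 2)
      = (qs cl - q ^ (cl - 2)) * q ^ ((n : ℤ) + 1) := by
  rw [Esharp_cons_rep, Esharp_cons_rep]
  push_cast
  have e1 : (1 - q ^ ((n : ℤ) + 1 + 1)) / (1 - q) - (1 - q ^ ((n : ℤ) + 1)) / (1 - q)
      = q ^ ((n : ℤ) + 1) := by
    rw [show ((n : ℤ) + 1 + 1) = ((n : ℤ) + 1) + 1 by ring, zpow_add₀ hq0 _ 1, zpow_one,
      div_sub_div_same, eq_comm, eq_div_iff h1q]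
    ring
  have e2 : (1 - q ^ ((n : ℤ) + 1)) / (1 - q) - (1 - q ^ (n : ℤ)) / (1 - q) = q ^ (n : ℤ) := by
    rw [zpow_add₀ hq0 _ 1, zpow_one, div_sub_div_same, eq_comm, eq_div_iff h1q]
    ring
  have e3 : q ^ (cl - 1) * q ^ (n : ℤ) = q ^ (cl - 2) * q ^ ((n : ℤ) + 1) := by
    rw [← zpow_add₀ hq0, ← zpow_add₀ hq0, show cl - 1 + (n : ℤ) = cl - 2 + ((n : ℤ) + 1) by ring]
  linear_combination qs cl * e1 - q ^ (cl - 1) * e2 - e3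

theorem key (cl : ℤ) (n : ℕ) (cs : List ℤ) :
    q ^ ((n : ℤ) + 1) * Eflat (cs ++ [cl - 1])
      = Esharp (cs ++ [cl] ++ List.replicate (n + 1) 2)
        - Esharp (cs ++ [cl] ++ List.replicate n 2) := by
  match cs with
  | [] =>
    simp only [List.nil_append, List.singleton_append]
    rw [show Eflat [cl - 1] = qf (cl - 1) from rfl, qf_eq, diff_cons_rep]
    ring
  | [c] =>
    simp only [List.cons_append, List.nil_append]
    rw [show Eflat [c, cl - 1] = qs c * qf (cl - 1) - q ^ (c - 1) * 1 from rfl,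
      Esharp_cons, Esharp_cons, qf_eq]
    have hd := diff_cons_rep cl n
    have hr := diff_rep n
    have h1 : Esharp [] = 1 := rfl
    linear_combination (-(qs c)) * hd + q ^ (c - 1) * hr
  | c :: d :: rest =>
    have ih1 := key cl n (d :: rest)
    have ih2 := key cl n rest
    simp only [List.cons_append] at *
    rw [Eflat_cons, Esharp_cons, Esharp_cons]
    linear_combination qs c * ih1 - q ^ (c - 1) * ih2
termination_by cs.length

/-- q^{k−l+1}·E^♭_l(c_1,…,c_{l−1},c_l−1)
    = E^♯_{k+1}(c_1,…,c_l,2^{(k−l+1)}) − E^♯_k(c_1,…,c_l,2^{(k−l)}),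
with `n = k - l ≥ 0`. -/
theorem Eflat_shift (cs : List ℤ) (cl : ℤ) (hcl : 2 < cl) (n : ℕ) :
    q ^ ((n : ℤ) + 1) * Eflat (cs ++ [cl - 1])
      = Esharp ((cs ++ [cl]) ++ List.replicate (n + 1) 2)
        - Esharp ((cs ++ [cl]) ++ List.replicate n 2) := by
  exact key cl n cs
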